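/- Assume ρ = max_{t∈T} ∫_T |K(t,s)| μ(ds) < 1 and set β = max_{t₁,t₂∈T} ∫_T |K(t₁,s) K(t₂,s)| μ(ds). Then for every m ≥ 0 and every k ≥ 0, the k-fold iterate of V_K satisfies sup_{t₁,t₂∈T} |V_K^{k}[R_{m+1}](t₁,t₂)| ≤ β^{k+1} · ‖f‖²/(1 − ρ)²; consequently, for every M ≥ 1, Σ_{k=0}^{M−1} sup_{t₁,t₂} |V_K^{k}[R_{m+1}](t₁,t₂)| ≤ ‖f‖² (β + β² + ⋯ + β^M)/(1 − ρ)², which is at most β‖f‖²/((1 − β)(1 − ρ)²) when β < 1. -/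

import Mathlib

/-!
Since `ρ < 1`, the Neumann iterates stay bounded by `‖f‖ / (1 - ρ)`. The function `R_{m+1}(t₁, t₂)`
is the covariance under `μ` of `K(t₁, ·) x_m` and `K(t₂, ·) x_m`, so the Cauchy–Schwarz inequality
for covariances bounds it by `β ‖f‖² / (1 - ρ)²`, and every application of `V_K` multiplies a bound
on the diagonal by `β`. The sums are then geometric.
-/

open MeasureTheory ProbabilityTheory

section Covariance

variable {Ω : Type*} {mΩ : MeasurableSpace Ω} {μ : Measure Ω} {X Y : Ω → ℝ}

/-- `Var[t • X + Y] ≥ 0` for every `t`, so the discriminant of this quadratic in `t` is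
nonpositive. -/
lemma covariance_sq_le_variance_mul_variance [IsFiniteMeasure μ] (hX : MemLp X 2 μ)
    (hY : MemLp Y 2 μ) : cov[X, Y; μ] ^ 2 ≤ Var[X; μ] * Var[Y; μ] := by
  have hquad : ∀ t : ℝ, 0 ≤ Var[X; μ] * (t * t) + 2 * cov[X, Y; μ] * t + Var[Y; μ] := by
    intro t
    have h := variance_add (hX.const_smul t) hY
    rw [variance_smul, covariance_smul_left] at h
    nlinarith [variance_nonneg (t • X + Y) μ]
  have hdisc := discrim_le_zero hquad
  rw [discrim] at hdisc
  nlinarith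

lemma covariance_sq_le_integral_sq_mul_integral_sq [IsProbabilityMeasure μ] (hX : MemLp X 2 μ)
    (hY : MemLp Y 2 μ) : cov[X, Y; μ] ^ 2 ≤ μ[X ^ 2] * μ[Y ^ 2] :=
  (covariance_sq_le_variance_mul_variance hX hY).trans <|
    mul_le_mul (variance_le_expectation_sq hX.1) (variance_le_expectation_sq hY.1)
      (variance_nonneg _ _) (integral_nonneg fun _ => sq_nonneg _)

end Covariance

section Integrals

variable {α : Type*} [MeasurableSpace α] {μ : Measure α}

lemma abs_integral_mul_le_of_abs_le {k g : α → ℝ} {B : ℝ} (hk : Integrable k μ)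
    (hg : ∀ a, |g a| ≤ B) : |∫ a, k a * g a ∂μ| ≤ (∫ a, |k a| ∂μ) * B := by
  calc |∫ a, k a * g a ∂μ| ≤ ∫ a, |k a * g a| ∂μ := abs_integral_le_integral_abs
    _ ≤ ∫ a, |k a| * B ∂μ := by
        refine integral_mono_of_nonneg (ae_of_all _ fun _ => abs_nonneg _)
          (hk.abs.mul_const B) (ae_of_all _ fun a => ?_)
        simp only [abs_mul]
        exact mul_le_mul_of_nonneg_left (hg a) (abs_nonneg _)
    _ = (∫ a, |k a| ∂μ) * B := integral_mul_const B _

lemma integral_le_iSup_integral [IsFiniteMeasure μ] {ι : Type*} {F : ι → α → ℝ} {C : ℝ}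
    (hC : ∀ i a, |F i a| ≤ C) (i : ι) : ∫ a, F i a ∂μ ≤ ⨆ j, ∫ a, F j a ∂μ := by
  refine le_ciSup (f := fun j => ∫ a, F j a ∂μ) ⟨C * μ.real Set.univ, ?_⟩ i
  rintro _ ⟨j, rfl⟩
  exact (le_abs_self _).trans
    (norm_integral_le_of_norm_le_const (μ := μ) (f := F j) (ae_of_all _ (hC j)))

lemma integral_le_iSup_integral_of_continuous {ι : Type*} [TopologicalSpace ι] [CompactSpace ι]
    [TopologicalSpace α] [CompactSpace α] [IsFiniteMeasure μ] {G : ι → α → ℝ}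
    (hG : Continuous (Function.uncurry G)) (i : ι) : ∫ a, G i a ∂μ ≤ ⨆ j, ∫ a, G j a ∂μ :=
  integral_le_iSup_integral (C := ‖(⟨_, hG⟩ : C(ι × α, ℝ))‖)
    (fun j a => ContinuousMap.norm_coe_le_norm ⟨_, hG⟩ (j, a)) i

lemma Continuous.integrable_of_compactSpace [TopologicalSpace α] [CompactSpace α]
    [OpensMeasurableSpace α] [IsFiniteMeasure μ] {g : α → ℝ} (hg : Continuous g) :
    Integrable g μ :=
  hg.integrable_of_hasCompactSupport (.of_compactSpace g)

end Integrals

section Kernel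

variable {T : Type*} [MeasurableSpace T] {μ : Measure T} {K : T × T → ℝ}

lemma abs_neumann_iterate_le (hK : ∀ t, Integrable (fun s => K (t, s)) μ)
    {f : T → ℝ} {F : ℝ} (hf : ∀ t, |f t| ≤ F) {x : ℕ → T → ℝ} (hx0 : x 0 = f)
    (hxS : ∀ m t, x (m + 1) t = f t + ∫ s, K (t, s) * x m s ∂μ)
    {ρ : ℝ} (hρK : ∀ t, ∫ s, |K (t, s)| ∂μ ≤ ρ) (hρ : ρ < 1) (m : ℕ) (t : T) :
    |x m t| ≤ F / (1 - ρ) := by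
  have h1ρ : 0 < 1 - ρ := by linarith
  induction m generalizing t with
  | zero =>
    have hρ0 : 0 ≤ ρ := (integral_nonneg fun _ => abs_nonneg _).trans (hρK t)
    rw [hx0, le_div_iff₀ h1ρ]
    nlinarith [hf t, abs_nonneg (f t)]
  | succ m ih =>
    have hF : 0 ≤ F / (1 - ρ) := (abs_nonneg _).trans (ih t)
    have hKx : |∫ s, K (t, s) * x m s ∂μ| ≤ ρ * (F / (1 - ρ)) :=
      (abs_integral_mul_le_of_abs_le (hK t) ih).trans (mul_le_mul_of_nonneg_right (hρK t) hF)
    have hfix : F + ρ * (F / (1 - ρ)) = F / (1 - ρ) := by field_simp; ring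
    rw [hxS, ← hfix]
    exact (abs_add_le _ _).trans (add_le_add (hf t) hKx)

lemma abs_iterate_le_pow_mul {α : Type*} {V : (α → ℝ) → α → ℝ} {β : ℝ}
    (hV : ∀ S D, (∀ a, |S a| ≤ D) → ∀ a, |V S a| ≤ β * D) {S : α → ℝ} {D : ℝ}
    (hS : ∀ a, |S a| ≤ D) (k : ℕ) (a : α) : |V^[k] S a| ≤ β ^ k * D := by
  induction k generalizing a with
  | zero => simpa using hS a
  | succ k ih =>
    rw [Function.iterate_succ_apply', pow_succ', mul_assoc]
    exact hV _ _ ih a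

lemma abs_diagonal_transform_le {VK : (T × T → ℝ) → T × T → ℝ}
    (hVK : ∀ (R : T × T → ℝ) (p : T × T),
      VK R p = ∫ s, K (p.1, s) * K (p.2, s) * R (s, s) ∂μ)
    (hK : ∀ p : T × T, Integrable (fun s => K (p.1, s) * K (p.2, s)) μ)
    {β : ℝ} (hβK : ∀ p : T × T, ∫ s, |K (p.1, s) * K (p.2, s)| ∂μ ≤ β)
    {S : T × T → ℝ} {D : ℝ} (hS : ∀ p, |S p| ≤ D) (p : T × T) : |VK S p| ≤ β * D := by
  have hD : 0 ≤ D := (abs_nonneg _).trans (hS (p.1, p.1))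
  rw [hVK]
  exact (abs_integral_mul_le_of_abs_le (hK p) fun s => hS (s, s)).trans
    (mul_le_mul_of_nonneg_right (hβK p) hD)

lemma abs_integral_sub_integral_mul_integral_le [TopologicalSpace T] [CompactSpace T]
    [OpensMeasurableSpace T] [IsProbabilityMeasure μ] (hK : Continuous K) {g : C(T, ℝ)}
    {N : ℝ} (hg : ∀ s, |g s| ≤ N) {β : ℝ}
    (hβK : ∀ p : T × T, ∫ s, |K (p.1, s) * K (p.2, s)| ∂μ ≤ β) (p : T × T) :
    |∫ s, K (p.1, s) * K (p.2, s) * g s ^ 2 ∂μ -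
        (∫ s, K (p.1, s) * g s ∂μ) * (∫ s, K (p.2, s) * g s ∂μ)| ≤ β * N ^ 2 := by
  have hmem : ∀ t, MemLp (fun s => K (t, s) * g s) 2 μ := fun t =>
    Continuous.memLp_of_hasCompactSupport (by fun_prop) (.of_compactSpace _)
  have hg2 : ∀ s, |g s ^ 2| ≤ N ^ 2 := fun s => by
    rw [abs_pow]
    exact pow_le_pow_left₀ (abs_nonneg _) (hg s) 2
  have hsq : ∀ t, μ[(fun s => K (t, s) * g s) ^ 2] ≤ β * N ^ 2 := fun t => by
    calc μ[(fun s => K (t, s) * g s) ^ 2] = ∫ s, K (t, s) * K (t, s) * g s ^ 2 ∂μ := by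
          simp only [Pi.pow_apply]; congr 1 with s; ring
      _ ≤ (∫ s, |K (t, s) * K (t, s)| ∂μ) * N ^ 2 :=
          (le_abs_self _).trans <| abs_integral_mul_le_of_abs_le
            (Continuous.integrable_of_compactSpace (by fun_prop)) hg2
      _ ≤ β * N ^ 2 := mul_le_mul_of_nonneg_right (hβK (t, t)) (sq_nonneg _)
  have hβN : 0 ≤ β * N ^ 2 := (integral_nonneg fun _ => sq_nonneg _).trans (hsq p.1)
  have hcov : ∫ s, K (p.1, s) * K (p.2, s) * g s ^ 2 ∂μ -
      (∫ s, K (p.1, s) * g s ∂μ) * (∫ s, K (p.2, s) * g s ∂μ) =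
      cov[fun s => K (p.1, s) * g s, fun s => K (p.2, s) * g s; μ] := by
    rw [covariance_eq_sub (hmem _) (hmem _)]
    simp only [Pi.mul_apply]
    congr 2 with s
    ring
  rw [hcov]
  refine abs_le_of_sq_le_sq ?_ hβN
  calc _ ≤ _ := covariance_sq_le_integral_sq_mul_integral_sq (hmem _) (hmem _)
    _ ≤ (β * N ^ 2) * (β * N ^ 2) :=
        mul_le_mul (hsq _) (hsq _) (integral_nonneg fun _ => sq_nonneg _) hβN
    _ = (β * N ^ 2) ^ 2 := (sq _).symm

end Kernel

lemma sum_Icc_one_pow_le_div {β : ℝ} (hβ0 : 0 ≤ β) (hβ1 : β < 1) (M : ℕ) :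
    ∑ j ∈ Finset.Icc 1 M, β ^ j ≤ β / (1 - β) := by
  rw [← Finset.Ico_add_one_right_eq_Icc]
  simpa using geom_sum_Ico_le_of_lt_one (m := 1) (n := M + 1) hβ0 hβ1

lemma sum_Icc_one_pow_eq_sum_range_pow_succ (β : ℝ) (M : ℕ) :
    ∑ j ∈ Finset.Icc 1 M, β ^ j = ∑ k ∈ Finset.range M, β ^ (k + 1) := by
  rw [Finset.range_eq_Ico, Finset.sum_Ico_add', ← Finset.Ico_add_one_right_eq_Icc, zero_add]

theorem VK_iterates_bounds_general
    {T : Type*} [MetricSpace T] [CompactSpace T]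
    [MeasurableSpace T] [BorelSpace T]
    (μ : Measure T) [IsProbabilityMeasure μ]
    (K : T × T → ℝ) (hK : Continuous K)
    (f : C(T, ℝ))
    (x : ℕ → C(T, ℝ)) (hx0 : x 0 = f)
    (hxS : ∀ m t, x (m + 1) t = f t + ∫ s, K (t, s) * x m s ∂μ)
    (ρ : ℝ) (hρdef : ρ = ⨆ t : T, ∫ s, |K (t, s)| ∂μ) (hρ : ρ < 1)
    (β : ℝ) (hβdef : β = ⨆ p : T × T, ∫ s, |K (p.1, s) * K (p.2, s)| ∂μ)
    (VK : (T × T → ℝ) → T × T → ℝ)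
    (hVK : ∀ (R : T × T → ℝ) (p : T × T),
      VK R p = ∫ s, K (p.1, s) * K (p.2, s) * R (s, s) ∂μ)
    (R : ℕ → T × T → ℝ)
    (hR : ∀ (m : ℕ) (p : T × T), R (m + 1) p =
      ∫ s, K (p.1, s) * K (p.2, s) * (x m s) ^ 2 ∂μ -
        (∫ s, K (p.1, s) * x m s ∂μ) * (∫ s, K (p.2, s) * x m s ∂μ)) :
    (∀ m k : ℕ,
      (⨆ p : T × T, |VK^[k] (R (m + 1)) p|) ≤ β ^ (k + 1) * ‖f‖ ^ 2 / (1 - ρ) ^ 2) ∧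
    (∀ m M : ℕ, 1 ≤ M →
      (∑ k ∈ Finset.range M, ⨆ p : T × T, |VK^[k] (R (m + 1)) p|) ≤
        ‖f‖ ^ 2 * (∑ j ∈ Finset.Icc 1 M, β ^ j) / (1 - ρ) ^ 2) ∧
    (∀ m M : ℕ, 1 ≤ M → β < 1 →
      (∑ k ∈ Finset.range M, ⨆ p : T × T, |VK^[k] (R (m + 1)) p|) ≤
        β * ‖f‖ ^ 2 / ((1 - β) * (1 - ρ) ^ 2)) := by
  have hρK : ∀ t, ∫ s, |K (t, s)| ∂μ ≤ ρ :=
    hρdef ▸ integral_le_iSup_integral_of_continuous (by fun_prop)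
  have hβK : ∀ p : T × T, ∫ s, |K (p.1, s) * K (p.2, s)| ∂μ ≤ β :=
    hβdef ▸ integral_le_iSup_integral_of_continuous (by fun_prop)
  have hβ0 : 0 ≤ β := hβdef ▸ Real.iSup_nonneg fun _ => integral_nonneg fun _ => abs_nonneg _
  have hx : ∀ m s, |x m s| ≤ ‖f‖ / (1 - ρ) :=
    abs_neumann_iterate_le (fun _ => Continuous.integrable_of_compactSpace (by fun_prop))
      (fun t => Real.norm_eq_abs (f t) ▸ f.norm_coe_le_norm t) (x := fun m => x m)
      (congrArg DFunLike.coe hx0) hxS hρK hρ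
  have hiter : ∀ m k p, |VK^[k] (R (m + 1)) p| ≤ β ^ k * (β * (‖f‖ / (1 - ρ)) ^ 2) :=
    fun m => abs_iterate_le_pow_mul
      (fun _ _ => abs_diagonal_transform_le hVK
        (fun _ => Continuous.integrable_of_compactSpace (by fun_prop)) hβK)
      fun p => hR m p ▸ abs_integral_sub_integral_mul_integral_le hK (hx m) hβK p
  have hsup : ∀ m k, (⨆ p, |VK^[k] (R (m + 1)) p|) ≤ β ^ (k + 1) * ‖f‖ ^ 2 / (1 - ρ) ^ 2 :=
    fun m k => Real.iSup_le (fun p => (hiter m k p).trans_eq (by rw [div_pow]; ring))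
      (by positivity)
  have hsum : ∀ m M, (∑ k ∈ Finset.range M, ⨆ p, |VK^[k] (R (m + 1)) p|) ≤
      ‖f‖ ^ 2 * (∑ j ∈ Finset.Icc 1 M, β ^ j) / (1 - ρ) ^ 2 := fun m M =>
    (Finset.sum_le_sum fun k _ => hsup m k).trans_eq <| by
      rw [sum_Icc_one_pow_eq_sum_range_pow_succ, Finset.mul_sum, Finset.sum_div]
      exact Finset.sum_congr rfl fun k _ => by ring
  refine ⟨hsup, fun m M _ => hsum m M, fun m M _ hβ1 => (hsum m M).trans ?_⟩
  calc ‖f‖ ^ 2 * (∑ j ∈ Finset.Icc 1 M, β ^ j) / (1 - ρ) ^ 2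
      ≤ ‖f‖ ^ 2 * (β / (1 - β)) / (1 - ρ) ^ 2 := by
        gcongr
        exact sum_Icc_one_pow_le_div hβ0 hβ1 M
    _ = β * ‖f‖ ^ 2 / ((1 - β) * (1 - ρ) ^ 2) := by field_simp

/-- If `ρ < 1` and `β = max_{t₁,t₂} ∫ |K(t₁,s)K(t₂,s)| μ(ds)`, then for every `m ≥ 0` and
`k ≥ 0` the `k`-fold iterate of `V_K` satisfies
`sup |V_K^k[R_{m+1}]| ≤ β^{k+1} ‖f‖²/(1−ρ)²`; consequently for every `M ≥ 1`,
`Σ_{k=0}^{M−1} sup |V_K^k[R_{m+1}]| ≤ ‖f‖² (β + ⋯ + β^M)/(1−ρ)²`, which is at most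
`β ‖f‖²/((1−β)(1−ρ)²)` when `β < 1`. -/
theorem VK_iterates_bounds
    {T : Type*} [MetricSpace T] [CompactSpace T] [Nonempty T]
    [MeasurableSpace T] [BorelSpace T]
    (μ : Measure T) [IsProbabilityMeasure μ] [μ.IsOpenPosMeasure]
    (K : T × T → ℝ) (hK : Continuous K)
    (f : C(T, ℝ))
    (x : ℕ → C(T, ℝ)) (hx0 : x 0 = f)
    (hxS : ∀ m t, x (m + 1) t = f t + ∫ s, K (t, s) * x m s ∂μ)
    (ρ : ℝ) (hρdef : ρ = ⨆ t : T, ∫ s, |K (t, s)| ∂μ) (hρ : ρ < 1)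
    (β : ℝ) (hβdef : β = ⨆ p : T × T, ∫ s, |K (p.1, s) * K (p.2, s)| ∂μ)
    (VK : (T × T → ℝ) → T × T → ℝ)
    (hVK : ∀ (R : T × T → ℝ) (p : T × T),
      VK R p = ∫ s, K (p.1, s) * K (p.2, s) * R (s, s) ∂μ)
    (R : ℕ → T × T → ℝ)
    (hR : ∀ (m : ℕ) (p : T × T), R (m + 1) p =
      ∫ s, K (p.1, s) * K (p.2, s) * (x m s) ^ 2 ∂μ -
        (∫ s, K (p.1, s) * x m s ∂μ) * (∫ s, K (p.2, s) * x m s ∂μ)) :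
    (∀ m k : ℕ,
      (⨆ p : T × T, |VK^[k] (R (m + 1)) p|) ≤ β ^ (k + 1) * ‖f‖ ^ 2 / (1 - ρ) ^ 2) ∧
    (∀ m M : ℕ, 1 ≤ M →
      (∑ k ∈ Finset.range M, ⨆ p : T × T, |VK^[k] (R (m + 1)) p|) ≤
        ‖f‖ ^ 2 * (∑ j ∈ Finset.Icc 1 M, β ^ j) / (1 - ρ) ^ 2) ∧
    (∀ m M : ℕ, 1 ≤ M → β < 1 →
      (∑ k ∈ Finset.range M, ⨆ p : T × T, |VK^[k] (R (m + 1)) p|) ≤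
        β * ‖f‖ ^ 2 / ((1 - β) * (1 - ρ) ^ 2)) :=
  VK_iterates_bounds_general μ K hK f x hx0 hxS ρ hρdef hρ β hβdef VK hVK R hR
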